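/- arXiv:1312.5698 — 4 statements merged into one kernel-verified Lean document; each statement's English description precedes it below -/
import Mathlib

section
/- The star arboricity of the hypercube Q_3 equals 3. -/
/-- The `n`-dimensional hypercube graph on binary vectors of length `n`:
two vertices are adjacent iff they differ in exactly one coordinate. -/
def cubeGraph (n : ℕ) : SimpleGraph (Fin n → Bool) where
  Adj u v := (Finset.univ.filter fun i => u i ≠ v i).card = 1
  symm := by
    constructor
    intro u v h
    have : (Finset.univ.filter fun i => v i ≠ u i)
        = (Finset.univ.filter fun i => u i ≠ v i) := by
      apply Finset.filter_congr
      intro i _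
      exact ⟨Ne.symm, Ne.symm⟩
    simpa [this] using h
  loopless := by constructor; intro u h; simp at h

/-- A galaxy (star forest): no triangles and no path with three edges,
equivalently every connected component is a star. -/
def IsGalaxy {V : Type*} (F : SimpleGraph V) : Prop :=
  (∀ a b c, F.Adj a b → F.Adj b c → ¬ F.Adj c a) ∧
  (∀ a b c d, F.Adj a b → F.Adj b c → F.Adj c d → a = c ∨ b = d)

/-- The star arboricity of `G`: the least `n` such that the edges of `G`
can be partitioned into `n` galaxies. -/
noncomputable def starArboricity {V : Type*} (G : SimpleGraph V) : ℕ :=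
  sInf {n | ∃ F : Fin n → SimpleGraph V,
    (∀ i, F i ≤ G) ∧ (∀ i, IsGalaxy (F i)) ∧
    (∀ u v, G.Adj u v → ∃! i, (F i).Adj u v)}


/-! The edges of `Q_n` in a fixed direction form a perfect matching, which is a galaxy, so
`sa(Q_n) ≤ n`. Conversely, a galaxy has at most as many edges as leaves. If a graph whose degrees
are all at least three is split into at most two galaxies, each vertex is a leaf of at most one of
them, so the graph has at most `|V|` edges; but it has at least `3|V|/2`. -/

open Finset SimpleGraph

variable {V : Type*}

def IsGalaxyDecomposition (G : SimpleGraph V) {m : ℕ} (F : Fin m → SimpleGraph V) : Prop :=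
  (∀ i, F i ≤ G) ∧ (∀ i, IsGalaxy (F i)) ∧ (∀ u v, G.Adj u v → ∃! i, (F i).Adj u v)

theorem starArboricity_le {G : SimpleGraph V} {m : ℕ} {F : Fin m → SimpleGraph V}
    (hF : IsGalaxyDecomposition G F) : starArboricity G ≤ m :=
  Nat.sInf_le ⟨F, hF⟩

theorem IsGalaxy.of_adj_unique {F : SimpleGraph V}
    (h : ∀ a b c, F.Adj a b → F.Adj a c → b = c) : IsGalaxy F := by
  refine ⟨fun a b c hab hbc hca => ?_, fun a b c d hab hbc _ => .inl (h b a c hab.symm hbc)⟩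
  exact F.loopless.irrefl a (h b a c hab.symm hbc ▸ hca.symm)

section Finite

variable [Fintype V]

theorem IsGalaxy.degree_eq_one_or_degree_eq_one {F : SimpleGraph V} [DecidableRel F.Adj]
    (hF : IsGalaxy F) {u v : V} (h : F.Adj u v) : F.degree u = 1 ∨ F.degree v = 1 := by
  by_contra! hc
  have hu : 1 < F.degree u := by
    have := (F.degree_pos_iff_exists_adj u).2 ⟨v, h⟩; omega
  have hv : 1 < F.degree v := by
    have := (F.degree_pos_iff_exists_adj v).2 ⟨u, h.symm⟩; omega
  obtain ⟨a, ha, hav⟩ := exists_mem_ne hu v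
  obtain ⟨b, hb, hbu⟩ := exists_mem_ne hv u
  rw [mem_neighborFinset] at ha hb
  rcases hF.2 a u v b ha.symm h hb with rfl | rfl
  · exact hav rfl
  · exact hbu rfl

/-- Every edge contains a leaf, and a leaf lies on only one edge. -/
theorem IsGalaxy.card_edgeFinset_le {F : SimpleGraph V} [DecidableEq V] [DecidableRel F.Adj]
    (hF : IsGalaxy F) : #F.edgeFinset ≤ #{v | F.degree v = 1} := by
  have hcover :
      F.edgeFinset ⊆ ({v | F.degree v = 1} : Finset V).biUnion fun v => F.incidenceFinset v := by
    intro e he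
    induction e using Sym2.ind with
    | _ u v =>
      rw [mem_edgeFinset, mem_edgeSet] at he
      simp only [mem_biUnion, mem_filter, mem_univ, true_and, mem_incidenceFinset]
      rcases hF.degree_eq_one_or_degree_eq_one he with hu | hv
      · exact ⟨u, hu, he, Sym2.mem_mk_left u v⟩
      · exact ⟨v, hv, he, Sym2.mem_mk_right u v⟩
  calc #F.edgeFinset ≤ ∑ v ∈ {v | F.degree v = 1}, #(F.incidenceFinset v) :=
        (card_le_card hcover).trans card_biUnion_le
    _ = #{v | F.degree v = 1} := by
        rw [card_eq_sum_ones]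
        refine sum_congr rfl fun v hv => ?_
        rw [card_incidenceFinset_eq_degree, (mem_filter.1 hv).2]

namespace IsGalaxyDecomposition

variable {G : SimpleGraph V} {m : ℕ} {F : Fin m → SimpleGraph V}

theorem degree_eq_sum [DecidableRel G.Adj] [∀ i, DecidableRel (F i).Adj]
    (hF : IsGalaxyDecomposition G F) (v : V) : G.degree v = ∑ i, (F i).degree v := by
  classical
  have hunion : G.neighborFinset v = univ.biUnion fun i => (F i).neighborFinset v := by
    ext u
    simp only [mem_neighborFinset, mem_biUnion, mem_univ, true_and]
    exact ⟨fun h => (hF.2.2 v u h).exists, fun ⟨i, h⟩ => hF.1 i h⟩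
  have hdisj : ((univ : Finset (Fin m)) : Set (Fin m)).PairwiseDisjoint
      fun i => (F i).neighborFinset v := by
    intro i _ j _ hij
    refine disjoint_left.2 fun u hi hj => hij ?_
    rw [mem_neighborFinset] at hi hj
    exact (hF.2.2 v u (hF.1 i hi)).unique hi hj
  rw [← card_neighborFinset_eq_degree, hunion, card_biUnion hdisj]
  rfl

/-- The degrees of `v` in at most two parts sum to at least three, so at most one of them
is `1`. -/
theorem card_leaf_le_one [DecidableRel G.Adj] [∀ i, DecidableRel (F i).Adj]
    (hF : IsGalaxyDecomposition G F) (hm : m ≤ 2) {v : V} (hv : 3 ≤ G.degree v) :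
    #{i | (F i).degree v = 1} ≤ 1 := by
  by_contra! h
  have hle := card_le_univ ({i | (F i).degree v = 1} : Finset (Fin m))
  rw [Fintype.card_fin] at hle
  have hall : ({i | (F i).degree v = 1} : Finset (Fin m)) = univ :=
    eq_univ_of_card _ (by rw [Fintype.card_fin]; omega)
  have hsum : ∑ i, (F i).degree v = m := by
    rw [← hall, sum_congr rfl fun i hi => (mem_filter.1 hi).2, hall]
    simp
  have := hF.degree_eq_sum v
  omega

theorem three_le_of_three_le_degree [Nonempty V] [DecidableRel G.Adj]
    (hF : IsGalaxyDecomposition G F) (hdeg : ∀ v, 3 ≤ G.degree v) : 3 ≤ m := by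
  classical
  by_contra! hm
  have hedges : 3 * Fintype.card V ≤ 2 * ∑ i, #(F i).edgeFinset :=
    calc 3 * Fintype.card V = ∑ _v : V, 3 := by simp [mul_comm]
      _ ≤ ∑ v, ∑ i, (F i).degree v := sum_le_sum fun v _ => hF.degree_eq_sum v ▸ hdeg v
      _ = 2 * ∑ i, #(F i).edgeFinset := by
        rw [sum_comm, mul_sum]
        exact sum_congr rfl fun i _ => sum_degrees_eq_twice_card_edges (F i)
  have hleaves : ∑ i, #(F i).edgeFinset ≤ Fintype.card V :=
    calc ∑ i, #(F i).edgeFinset ≤ ∑ i, #{v | (F i).degree v = 1} :=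
          sum_le_sum fun i _ => (hF.2.1 i).card_edgeFinset_le
      _ = ∑ v, #{i | (F i).degree v = 1} := by
          simp only [card_filter]
          exact sum_comm
      _ ≤ ∑ _v : V, 1 := sum_le_sum fun v _ => hF.card_leaf_le_one (by omega) (hdeg v)
      _ = Fintype.card V := by simp
  have := Fintype.card_pos (α := V)
  omega

end IsGalaxyDecomposition

end Finite

def cubeMatching (n : ℕ) (i : Fin n) : SimpleGraph (Fin n → Bool) where
  Adj u v := u i ≠ v i ∧ ∀ j, j ≠ i → u j = v j
  symm := ⟨fun _ _ h => ⟨Ne.symm h.1, fun j hj => (h.2 j hj).symm⟩⟩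
  loopless := ⟨fun _ h => h.1 rfl⟩

instance (n : ℕ) (i : Fin n) : DecidableRel (cubeMatching n i).Adj := fun _ _ =>
  inferInstanceAs (Decidable (_ ∧ _))

instance (n : ℕ) : DecidableRel (cubeGraph n).Adj := fun _ _ =>
  inferInstanceAs (Decidable (_ = 1))

theorem cubeMatching_adj_iff {n : ℕ} {i : Fin n} {u v : Fin n → Bool} :
    (cubeMatching n i).Adj u v ↔ v = Function.update u i (!u i) := by
  constructor
  · rintro ⟨hi, hj⟩
    ext j
    rcases eq_or_ne j i with rfl | hji
    · simp only [Function.update_self]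
      cases h : u j <;> simp_all
    · simp [hji, hj j hji]
  · rintro rfl
    exact ⟨by simp, fun j hj => by simp [hj]⟩

theorem cubeMatching_adj_iff_filter_eq {n : ℕ} {i : Fin n} {u v : Fin n → Bool} :
    (cubeMatching n i).Adj u v ↔ ({j | u j ≠ v j} : Finset (Fin n)) = {i} := by
  simp only [Finset.ext_iff, mem_filter, mem_univ, true_and, mem_singleton]
  refine ⟨fun h j => ⟨fun hj => by_contra fun hji => hj (h.2 j hji), fun hj => hj ▸ h.1⟩,
    fun h => ⟨(h i).2 rfl, fun j hji => by_contra fun hj => hji ((h j).1 hj)⟩⟩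

theorem isGalaxyDecomposition_cubeMatching (n : ℕ) :
    IsGalaxyDecomposition (cubeGraph n) (cubeMatching n) := by
  refine ⟨fun i u v h => ?_, fun i => IsGalaxy.of_adj_unique fun a b c hb hc => ?_,
    fun u v h => ?_⟩
  · show #_ = 1
    rw [cubeMatching_adj_iff_filter_eq.1 h, card_singleton]
  · rw [cubeMatching_adj_iff] at hb hc
    rw [hb, hc]
  · obtain ⟨i, hi⟩ := card_eq_one.1 h
    exact ⟨i, cubeMatching_adj_iff_filter_eq.2 hi,
      fun j hj => singleton_inj.1 ((cubeMatching_adj_iff_filter_eq.1 hj).symm.trans hi)⟩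

theorem cubeMatching_degree (n : ℕ) (i : Fin n) (v : Fin n → Bool) :
    (cubeMatching n i).degree v = 1 := by
  rw [← card_neighborFinset_eq_degree, card_eq_one]
  exact ⟨Function.update v i (!v i), Finset.ext fun w => by simp [cubeMatching_adj_iff]⟩

theorem cubeGraph_degree (n : ℕ) (v : Fin n → Bool) : (cubeGraph n).degree v = n := by
  simp [(isGalaxyDecomposition_cubeMatching n).degree_eq_sum v, cubeMatching_degree]

/-- The star arboricity of the hypercube $Q_3$ equals 3. -/
theorem starArboricity_cube_three : starArboricity (cubeGraph 3) = 3 := by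
  have hcube := isGalaxyDecomposition_cubeMatching 3
  refine le_antisymm (starArboricity_le hcube) (le_csInf ⟨3, _, hcube⟩ ?_)
  rintro m ⟨F, hF⟩
  exact IsGalaxyDecomposition.three_le_of_three_le_degree hF fun v => (cubeGraph_degree 3 v).ge
end

section
/- For every graph G, the arboricity of G is at most the star arboricity of G, and the star arboricity of G is at most twice the arboricity of G. -/
/-- The arboricity of `G`: the least `n` such that the edges of `G`
can be partitioned into `n` forests. -/
noncomputable def arboricity {V : Type*} (G : SimpleGraph V) : ℕ :=
  sInf {n | ∃ F : Fin n → SimpleGraph V,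
    (∀ i, F i ≤ G) ∧ (∀ i, (F i).IsAcyclic) ∧
    (∀ u v, G.Adj u v → ∃! i, (F i).Adj u v)}

/-! A galaxy has no cycle, since a cycle contains three consecutive edges on four distinct
vertices; so every partition into galaxies is a partition into forests. Conversely, pick a root in
each component of a forest and let the depth of a vertex be its distance to that root. Along an
edge the depth changes by exactly one, and every vertex has at most one neighbour of smaller
depth. Hence the edges whose lower endpoint has even depth form a galaxy whose stars are centred at
those lower endpoints, and likewise for odd depth, so every forest splits into two galaxies.

Both invariants are infima in `ℕ`, hence `0` when no finite partition exists; by the two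
comparisons this happens for both invariants at once. -/

open SimpleGraph

section

variable {V : Type*}

def edgePartitionSizes (P : SimpleGraph V → Prop) (G : SimpleGraph V) : Set ℕ :=
  {n | ∃ F : Fin n → SimpleGraph V,
    (∀ i, F i ≤ G) ∧ (∀ i, P (F i)) ∧ (∀ u v, G.Adj u v → ∃! i, (F i).Adj u v)}

theorem arboricity_eq_sInf (G : SimpleGraph V) :
    arboricity G = sInf (edgePartitionSizes IsAcyclic G) := rfl

theorem starArboricity_eq_sInf (G : SimpleGraph V) :
    starArboricity G = sInf (edgePartitionSizes IsGalaxy G) := rfl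

section edgePartitionSizes

variable {P Q : SimpleGraph V → Prop} {G : SimpleGraph V}

theorem edgePartitionSizes_mono (h : ∀ H, P H → Q H) :
    edgePartitionSizes P G ⊆ edgePartitionSizes Q G :=
  fun _ ⟨F, hle, hP, huniq⟩ => ⟨F, hle, fun i => h _ (hP i), huniq⟩

theorem SimpleGraph.EdgeLabeling.mem_edgePartitionSizes {n : ℕ} (C : EdgeLabeling G (Fin n))
    (h : ∀ k, P (C.labelGraph k)) : n ∈ edgePartitionSizes P G := by
  refine ⟨C.labelGraph, fun _ => C.labelGraph_le, h, fun u v huv => ?_⟩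
  simp only [EdgeLabeling.labelGraph_adj]
  exact ⟨_, ⟨huv, rfl⟩, fun _ ⟨_, hk⟩ => hk.symm⟩

theorem mul_mem_edgePartitionSizes {k m : ℕ} (hm : m ∈ edgePartitionSizes Q G)
    (hk : ∀ H, Q H → k ∈ edgePartitionSizes P H) : k * m ∈ edgePartitionSizes P G := by
  obtain ⟨F, hFG, hQ, huniq⟩ := hm
  choose S hSF hP hSuniq using fun i => hk (F i) (hQ i)
  refine ⟨fun j => S (finProdFinEquiv.symm j).2 (finProdFinEquiv.symm j).1,
    fun j => (hSF _ _).trans (hFG _), fun j => hP _ _, fun u v huv => ?_⟩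
  rw [← finProdFinEquiv.existsUnique_congr_left (p := fun x => (S x.2 x.1).Adj u v)]
  obtain ⟨i, hi, hi_uniq⟩ := huniq u v huv
  obtain ⟨j, hj, hj_uniq⟩ := hSuniq i u v hi
  refine ⟨(j, i), hj, fun ⟨j', i'⟩ h => ?_⟩
  obtain rfl : i' = i := hi_uniq i' (hSF i' j' h)
  rw [hj_uniq j' h]

end edgePartitionSizes

theorem Nat.sInf_le_sInf_of_subset {s t : Set ℕ} (hst : s ⊆ t)
    (hne : t.Nonempty → s.Nonempty) : sInf t ≤ sInf s := by
  rcases s.eq_empty_or_nonempty with rfl | hs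
  · simp [Set.not_nonempty_iff_eq_empty.mp (mt hne Set.not_nonempty_empty)]
  · exact Nat.sInf_le (hst (Nat.sInf_mem hs))

theorem Nat.sInf_le_mul_sInf {s t : Set ℕ} {k : ℕ} (hts : ∀ n ∈ t, k * n ∈ s)
    (hne : s.Nonempty → t.Nonempty) : sInf s ≤ k * sInf t := by
  rcases t.eq_empty_or_nonempty with rfl | ht
  · simp [Set.not_nonempty_iff_eq_empty.mp (mt hne Set.not_nonempty_empty)]
  · exact Nat.sInf_le (hts _ (Nat.sInf_mem ht))

theorem IsGalaxy.isAcyclic {F : SimpleGraph V} (h : IsGalaxy F) : F.IsAcyclic := by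
  intro v w hw
  cases w with
  | nil => exact hw.ne_nil rfl
  | cons h1 p =>
    cases p with
    | nil => simpa using hw.three_le_length
    | cons h2 q =>
      cases q with
      | nil => simpa using hw.three_le_length
      | cons h3 r =>
        have hnd := hw.support_nodup
        simp only [Walk.support_cons, List.tail_cons, List.nodup_cons] at hnd
        rcases h.2 _ _ _ _ h1 h2 h3 with rfl | rfl
        · exact hnd.2.1 r.end_mem_support
        · exact hnd.1 (List.mem_cons_of_mem _ r.start_mem_support)

theorem isGalaxy_of_levels {H : SimpleGraph V} (d : V → ℕ) (k : ℕ)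
    (hstep : ∀ ⦃u v⦄, H.Adj u v → d u = d v + 1 ∨ d v = d u + 1)
    (hparent : ∀ ⦃b c e⦄, H.Adj b c → H.Adj e c → d b + 1 = d c → d e + 1 = d c →
      b = e)
    (hparity : ∀ ⦃u v⦄, H.Adj u v → min (d u) (d v) % 2 = k) : IsGalaxy H := by
  constructor
  · intro a b c hab hbc hca
    have := hstep hab; have := hstep hbc; have := hstep hca
    omega
  · intro a b c e hab hbc hce
    have := hparity hab; have := hparity hbc; have := hparity hce
    rcases hstep hab with hab' | hab' <;> rcases hstep hbc with hbc' | hbc'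
    · omega
    · rcases hstep hce with hce' | hce'
      · exact .inr (hparent hbc hce.symm (by omega) (by omega))
      · omega
    · exact .inl (hparent hab hbc.symm (by omega) (by omega))
    · omega

namespace SimpleGraph

variable {F : SimpleGraph V}

theorem IsAcyclic.eq_of_adj_of_dist_add_one (hF : F.IsAcyclic) {u b c e : V}
    (hb : F.Adj b c) (he : F.Adj e c) (hbd : F.dist u b + 1 = F.dist u c)
    (hed : F.dist u e + 1 = F.dist u c) : b = e := by
  classical
  have hreach : F.Reachable u c := Reachable.of_dist_ne_zero (by omega)
  obtain ⟨p, hp, -⟩ := hreach.exists_path_of_dist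
  suffices h : ∀ x, F.Adj x c → F.dist u x + 1 = F.dist u c → x = p.penultimate from
    (h b hb hbd).trans (h e he hed).symm
  intro x hx hxd
  obtain ⟨q, hq, hql⟩ := (hreach.trans hx.symm.reachable).exists_path_of_dist
  have hc : c ∉ q.support := fun hc => by
    have := F.dist_le (q.takeUntil c hc)
    have := q.length_takeUntil_le_length hc
    omega
  exact hF.eq_penultimate_of_adj_end hp hx.symm
    (hF.mem_support_of_ne_mem_support_of_adj_of_isPath hp hq hx.symm hc)

noncomputable def depth (F : SimpleGraph V) (v : V) : ℕ :=
  F.dist (F.connectedComponentMk v).out v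

theorem depth_eq_dist_of_adj {u v : V} (h : F.Adj u v) :
    F.depth v = F.dist (F.connectedComponentMk u).out v := by
  rw [depth, ConnectedComponent.sound h.reachable]

theorem reachable_out_connectedComponentMk (v : V) :
    F.Reachable (F.connectedComponentMk v).out v :=
  ConnectedComponent.exact (Quot.out_eq _)

theorem IsAcyclic.depth_eq_add_one_or (hF : F.IsAcyclic) {u v : V} (h : F.Adj u v) :
    F.depth u = F.depth v + 1 ∨ F.depth v = F.depth u + 1 := by
  rw [depth_eq_dist_of_adj h, depth]
  exact hF.dist_eq_dist_add_one_of_adj_of_reachable _ h (reachable_out_connectedComponentMk u)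

theorem IsAcyclic.eq_of_adj_of_depth_add_one (hF : F.IsAcyclic) {b c e : V}
    (hb : F.Adj b c) (he : F.Adj e c) (hbd : F.depth b + 1 = F.depth c)
    (hed : F.depth e + 1 = F.depth c) : b = e := by
  rw [depth_eq_dist_of_adj hb.symm] at hbd
  rw [depth_eq_dist_of_adj he.symm] at hed
  exact hF.eq_of_adj_of_dist_add_one hb he hbd hed

noncomputable def depthParityLabeling (F : SimpleGraph V) : EdgeLabeling F (Fin 2) :=
  EdgeLabeling.mk (fun u v _ => ⟨min (F.depth u) (F.depth v) % 2, Nat.mod_lt _ two_pos⟩)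
    fun u v _ => by rw [min_comm]

theorem IsAcyclic.isGalaxy_labelGraph_depthParityLabeling (hF : F.IsAcyclic) (k : Fin 2) :
    IsGalaxy (F.depthParityLabeling.labelGraph k) := by
  have hadj : ∀ ⦃u v⦄, (F.depthParityLabeling.labelGraph k).Adj u v →
      F.Adj u v ∧ min (F.depth u) (F.depth v) % 2 = k := fun u v h => by
    obtain ⟨huv, hk⟩ := (EdgeLabeling.labelGraph_adj u v).mp h
    exact ⟨huv, congrArg Fin.val hk⟩
  exact isGalaxy_of_levels F.depth k (fun u v h => hF.depth_eq_add_one_or (hadj h).1)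
    (fun b c e hb he => hF.eq_of_adj_of_depth_add_one (hadj hb).1 (hadj he).1)
    (fun u v h => (hadj h).2)

theorem IsAcyclic.two_mem_edgePartitionSizes_isGalaxy (hF : F.IsAcyclic) :
    2 ∈ edgePartitionSizes IsGalaxy F :=
  EdgeLabeling.mem_edgePartitionSizes _ hF.isGalaxy_labelGraph_depthParityLabeling

end SimpleGraph

end

theorem arboricity_le_starArboricity_le_two_mul_general {V : Type*}
    (G : SimpleGraph V) :
    arboricity G ≤ starArboricity G ∧ starArboricity G ≤ 2 * arboricity G := by
  have hforest : edgePartitionSizes IsGalaxy G ⊆ edgePartitionSizes IsAcyclic G :=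
    edgePartitionSizes_mono fun _ => IsGalaxy.isAcyclic
  have hsplit : ∀ n ∈ edgePartitionSizes IsAcyclic G, 2 * n ∈ edgePartitionSizes IsGalaxy G :=
    fun _ hn => mul_mem_edgePartitionSizes hn fun _ => IsAcyclic.two_mem_edgePartitionSizes_isGalaxy
  rw [arboricity_eq_sInf, starArboricity_eq_sInf]
  exact ⟨Nat.sInf_le_sInf_of_subset hforest fun ⟨n, hn⟩ => ⟨_, hsplit n hn⟩,
    Nat.sInf_le_mul_sInf hsplit fun ⟨n, hn⟩ => ⟨n, hforest hn⟩⟩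

/-- $a(G) \le sa(G) \le 2a(G)$ for every graph $G$. -/
theorem arboricity_le_starArboricity_le_two_mul {V : Type*} [Fintype V]
    (G : SimpleGraph V) :
    arboricity G ≤ starArboricity G ∧ starArboricity G ≤ 2 * arboricity G :=
  arboricity_le_starArboricity_le_two_mul_general G
end

section
/- For n ≥ 4, the star arboricity of the complete graph K_n equals ⌈n/2⌉ + 1. -/
open Finset SimpleGraph

namespace IsGalaxy

variable {V : Type*} {F : SimpleGraph V}

theorem of_forall_adj_pendant
    (h : ∀ u v, F.Adj u v → (∀ w, F.Adj u w → w = v) ∨ (∀ w, F.Adj v w → w = u)) :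
    IsGalaxy F := by
  refine ⟨fun a b c hab hbc hca => ?_, fun a b c d hab hbc hcd => ?_⟩
  · rcases h a b hab with ha | hb
    · exact hbc.ne (ha c hca.symm ▸ rfl)
    · exact hca.ne (hb c hbc ▸ rfl)
  · rcases h b c hbc with hb | hc
    · exact .inl (hb a hab.symm)
    · exact .inr (hc d hcd).symm

theorem comap {W : Type*} {f : W → V} (hf : f.Injective) (hF : IsGalaxy F) :
    IsGalaxy (F.comap f) :=
  ⟨fun _ _ _ => hF.1 _ _ _, fun _ _ _ _ hab hbc hcd =>
    (hF.2 _ _ _ _ hab hbc hcd).imp (@hf _ _) (@hf _ _)⟩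

theorem comap_subtype_ne_eq_bot (hF : IsGalaxy F) {c : V} (hc : F.IsUniversal c) :
    F.comap ((↑) : {v // v ≠ c} → V) = ⊥ := by
  ext u v
  exact iff_of_false (fun huv => hF.1 _ _ _ huv (hc v.2.symm).symm (hc u.2.symm)) id

variable [Fintype V] [DecidableRel F.Adj]

theorem not_adj_of_two_le_degree (hF : IsGalaxy F) {u v : V} (hu : 2 ≤ F.degree u)
    (hv : 2 ≤ F.degree v) : ¬ F.Adj u v := by
  intro huv
  rw [← card_neighborFinset_eq_degree] at hu hv
  obtain ⟨a, ha, hav⟩ := exists_mem_ne hu v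
  obtain ⟨b, hb, hbu⟩ := exists_mem_ne hv u
  rw [mem_neighborFinset] at ha hb
  exact (hF.2 a u v b ha.symm huv hb).elim hav (fun h => hbu h.symm)

theorem sum_degree_le_card_filter_degree_lt_two [DecidableEq V] (hF : IsGalaxy F) :
    ∑ v ∈ univ.filter (2 ≤ F.degree ·), F.degree v ≤ #(univ.filter (¬ 2 ≤ F.degree ·)) := by
  have hdisj : (univ.filter (2 ≤ F.degree ·) : Set V).PairwiseDisjoint (F.neighborFinset ·) := by
    intro x hx y hy hxy
    refine disjoint_left.2 fun u hux huy => ?_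
    rw [mem_neighborFinset] at hux huy
    have hu : 2 ≤ F.degree u := by
      rw [← card_neighborFinset_eq_degree]
      exact one_lt_card.2 ⟨x, by simpa using hux.symm, y, by simpa using huy.symm, hxy⟩
    exact hF.not_adj_of_two_le_degree (by simpa using hx) hu hux
  calc ∑ v ∈ univ.filter (2 ≤ F.degree ·), F.degree v
      = #((univ.filter (2 ≤ F.degree ·)).biUnion (F.neighborFinset ·)) := by
        rw [card_biUnion hdisj]
        exact sum_congr rfl fun v _ => (card_neighborFinset_eq_degree F v).symm
    _ ≤ _ := card_le_card fun u hu => ?_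
  obtain ⟨c, hc, hcu⟩ := mem_biUnion.1 hu
  simp only [mem_filter, mem_univ, true_and] at hc ⊢
  exact fun h2 => hF.not_adj_of_two_le_degree hc h2 ((mem_neighborFinset _ _ _).1 hcu)

theorem exists_isUniversal [DecidableEq V] (hF : IsGalaxy F) (hV : 3 ≤ Fintype.card V)
    (hE : Fintype.card V - 1 ≤ #F.edgeFinset) : ∃ c, F.IsUniversal c := by
  set C := univ.filter (2 ≤ F.degree ·)
  set L := univ.filter (¬ 2 ≤ F.degree ·)
  have hsum : ∑ v ∈ C, F.degree v + ∑ v ∈ L, F.degree v = 2 * #F.edgeFinset := by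
    rw [sum_filter_add_sum_filter_not, sum_degrees_eq_twice_card_edges]
  have hC : ∑ v ∈ C, F.degree v ≤ #L := hF.sum_degree_le_card_filter_degree_lt_two
  have hL : ∑ v ∈ L, F.degree v ≤ #L := by
    refine (sum_le_card_nsmul L _ 1 fun v hv => ?_).trans_eq (mul_one _)
    simp only [L, mem_filter] at hv
    omega
  have hcard : #C + #L = Fintype.card V := card_filter_add_card_filter_not _
  have hC1 : #C = 1 := by
    rcases (#C).eq_zero_or_pos with h0 | _
    · rw [card_eq_zero.1 h0, sum_empty] at hsum
      omega
    · omega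
  obtain ⟨c, hc⟩ := card_eq_one.1 hC1
  rw [hc, sum_singleton] at hsum
  refine ⟨c, (F.degree_eq_card_sub_one c).1 ?_⟩
  have := F.degree_lt_card_verts c
  omega

end IsGalaxy

structure IsGalaxyDecomposition_s5 {ι V : Type*} (G : SimpleGraph V) (F : ι → SimpleGraph V) :
    Prop where
  le : ∀ i, F i ≤ G
  isGalaxy : ∀ i, IsGalaxy (F i)
  existsUnique_adj : ∀ u v, G.Adj u v → ∃! i, (F i).Adj u v

theorem starArboricity_eq_sInf_s5 {V : Type*} (G : SimpleGraph V) :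
    starArboricity G = sInf {n | ∃ F : Fin n → SimpleGraph V, IsGalaxyDecomposition_s5 G F} := by
  unfold starArboricity
  congr! 3 with n
  exact ⟨fun ⟨F, hle, hgal, huniq⟩ => ⟨F, hle, hgal, huniq⟩, fun ⟨F, h⟩ => ⟨F, h.1, h.2, h.3⟩⟩

namespace IsGalaxyDecomposition_s5

variable {ι V : Type*} {G : SimpleGraph V} {F : ι → SimpleGraph V}

theorem reindex {κ : Type*} (h : IsGalaxyDecomposition_s5 G F) (e : κ ≃ ι) :
    IsGalaxyDecomposition_s5 G (F ∘ e) where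
  le i := h.le (e i)
  isGalaxy i := h.isGalaxy (e i)
  existsUnique_adj u v huv := by
    obtain ⟨i, hi, huniq⟩ := h.existsUnique_adj u v huv
    exact ⟨e.symm i, by simpa using hi, fun j hj => e.eq_symm_apply.2 (huniq _ hj)⟩

theorem comap {W : Type*} {f : W → V} (hf : f.Injective) (h : IsGalaxyDecomposition_s5 G F) :
    IsGalaxyDecomposition_s5 (G.comap f) (fun i => (F i).comap f) where
  le i _ _ huv := h.le i huv
  isGalaxy i := (h.isGalaxy i).comap hf
  existsUnique_adj u v huv := h.existsUnique_adj (f u) (f v) huv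

theorem subtype_ne (h : IsGalaxyDecomposition_s5 G F) {i₀ : ι} (hi₀ : F i₀ = ⊥) :
    IsGalaxyDecomposition_s5 G (fun i : {i // i ≠ i₀} => F i) where
  le i := h.le i
  isGalaxy i := h.isGalaxy i
  existsUnique_adj u v huv := by
    obtain ⟨i, hi, huniq⟩ := h.existsUnique_adj u v huv
    have hne : i ≠ i₀ := by rintro rfl; simp [hi₀] at hi
    exact ⟨⟨i, hne⟩, hi, fun j hj => Subtype.ext (huniq j hj)⟩

theorem starArboricity_le_card [Fintype ι] (h : IsGalaxyDecomposition_s5 G F) :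
    starArboricity G ≤ Fintype.card ι := by
  rw [starArboricity_eq_sInf_s5]
  exact Nat.sInf_le ⟨_, h.reindex (Fintype.equivFin ι).symm⟩

theorem exists_fin_starArboricity [Finite ι] (h : IsGalaxyDecomposition_s5 G F) :
    ∃ F' : Fin (starArboricity G) → SimpleGraph V, IsGalaxyDecomposition_s5 G F' := by
  rw [starArboricity_eq_sInf_s5]
  exact Nat.sInf_mem (s := {n | ∃ F : Fin n → SimpleGraph V, IsGalaxyDecomposition_s5 G F})
    ⟨_, _, h.reindex (Finite.equivFin ι).symm⟩

theorem sum_card_edgeFinset [Fintype ι] [Fintype V] [DecidableEq V] [DecidableRel G.Adj]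
    [∀ i, DecidableRel (F i).Adj] (h : IsGalaxyDecomposition_s5 G F) :
    ∑ i, #(F i).edgeFinset = #G.edgeFinset := by
  have hdisj : ((univ : Finset ι) : Set ι).PairwiseDisjoint (fun i => (F i).edgeFinset) := by
    intro i _ j _ hij
    refine disjoint_left.2 fun e hi hj => ?_
    induction e using Sym2.ind with
    | h u v =>
      rw [mem_edgeFinset, mem_edgeSet] at hi hj
      obtain ⟨k, -, hk⟩ := h.existsUnique_adj u v (h.le i hi)
      exact hij ((hk i hi).trans (hk j hj).symm)
  rw [← card_biUnion hdisj]
  congr 1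
  ext e
  induction e using Sym2.ind with
  | h u v =>
    simp only [mem_biUnion, mem_univ, true_and, mem_edgeFinset, mem_edgeSet]
    exact ⟨fun ⟨i, hi⟩ => h.le i hi, fun huv => (h.existsUnique_adj u v huv).exists⟩

end IsGalaxyDecomposition_s5

theorem IsGalaxyDecomposition_s5.card_lt_of_top {ι V : Type*} [Fintype ι] [Fintype V]
    {F : ι → SimpleGraph V} (h : IsGalaxyDecomposition_s5 ⊤ F)
    (hι : 2 * Fintype.card ι ≤ Fintype.card V + 1) :
    Fintype.card V < Fintype.card ι + 2 := by
  classical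
  induction hm : Fintype.card ι generalizing V ι with
  | zero =>
    by_contra! hV
    obtain ⟨u, v, huv⟩ := Fintype.exists_pair_of_one_lt_card (by omega : 1 < Fintype.card V)
    obtain ⟨i, -⟩ := h.existsUnique_adj u v huv
    exact (Fintype.card_eq_zero_iff.1 hm).elim i
  | succ m ih =>
    by_contra! hV
    obtain ⟨i₀, hi₀⟩ : ∃ i, Fintype.card V - 2 < #(F i).edgeFinset := by
      refine (exists_lt_of_sum_lt (s := univ) ?_).imp fun i hi => hi.2
      rw [h.sum_card_edgeFinset, card_edgeFinset_top_eq_card_choose_two, sum_const, card_univ,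
        hm, smul_eq_mul, Nat.choose_two_right, Nat.lt_iff_add_one_le,
        Nat.le_div_iff_mul_le two_pos]
      obtain ⟨p, hp⟩ : ∃ p, Fintype.card V = p + 3 := ⟨_, (Nat.sub_add_cancel (by omega)).symm⟩
      rw [hp, show p + 3 - 2 = p + 1 by omega, show p + 3 - 1 = p + 2 by omega]
      nlinarith
    obtain ⟨c, hc⟩ := (h.isGalaxy i₀).exists_isUniversal (by omega) (by omega)
    have h' := (h.comap Subtype.val_injective).subtype_ne
      ((h.isGalaxy i₀).comap_subtype_ne_eq_bot hc)
    rw [comap_top Subtype.val_injective] at h'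
    have hV' : Fintype.card {v // v ≠ c} = Fintype.card V - 1 := by simp
    have hι' : Fintype.card {i // i ≠ i₀} = m := by simp [hm]
    have := ih h' (by omega) hι'
    omega

def starForest {V : Type*} (S : Set V) (p : V → V) : SimpleGraph V :=
  SimpleGraph.fromRel fun u v => v ∉ S ∧ u = p v

theorem isGalaxy_starForest {V : Type*} {S : Set V} {p : V → V} (hp : ∀ v ∉ S, p v ∈ S) :
    IsGalaxy (starForest S p) := by
  have hleaf : ∀ u v, v ∉ S → u = p v → ∀ w, (starForest S p).Adj v w → w = u := by
    rintro u v hv rfl w ⟨-, ⟨hw, rfl⟩ | ⟨-, rfl⟩⟩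
    · exact absurd (hp w hw) hv
    · rfl
  refine IsGalaxy.of_forall_adj_pendant fun u v ⟨_, huv⟩ => ?_
  rcases huv with ⟨hv, rfl⟩ | ⟨hu, rfl⟩
  · exact .inr (hleaf _ v hv rfl)
  · exact .inl (hleaf _ u hu rfl)

def blockStarForest (k : ℕ) : Option (Fin k) → SimpleGraph (Fin k × Bool)
  | none => starForest {v | v.2} fun v => (v.1, true)
  | some i => starForest {v | v.1 = i} fun v => (i, if i < v.1 then v.2 else !v.2)

def blockIndex {k : ℕ} (u v : Fin k × Bool) : Option (Fin k) :=
  if u.1 = v.1 then none else some (if u.2 = v.2 then min u.1 v.1 else max u.1 v.1)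

theorem blockStarForest_adj {k : ℕ} {o : Option (Fin k)} {u v : Fin k × Bool} :
    (blockStarForest k o).Adj u v ↔ u ≠ v ∧ o = blockIndex u v := by
  obtain ⟨a, x⟩ := u
  obtain ⟨b, y⟩ := v
  cases o <;> cases x <;> cases y <;> simp [blockStarForest, starForest, blockIndex] <;> grind

theorem isGalaxyDecomposition_blockStarForest (k : ℕ) :
    IsGalaxyDecomposition_s5 ⊤ (blockStarForest k) where
  le _ _ _ huv := (blockStarForest_adj.1 huv).1
  isGalaxy o := by cases o <;> exact isGalaxy_starForest fun _ _ => rfl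
  existsUnique_adj u v huv :=
    ⟨blockIndex u v, blockStarForest_adj.2 ⟨huv, rfl⟩, fun _ ho => (blockStarForest_adj.1 ho).2⟩

theorem exists_isGalaxyDecomposition_top (V : Type*) [Fintype V] {k : ℕ}
    (hk : Fintype.card V ≤ 2 * k) :
    ∃ F : Option (Fin k) → SimpleGraph V, IsGalaxyDecomposition_s5 ⊤ F := by
  obtain ⟨f⟩ := Function.Embedding.nonempty_of_card_le
    (show Fintype.card V ≤ Fintype.card (Fin k × Bool) by simpa [mul_comm] using hk)
  have h := (isGalaxyDecomposition_blockStarForest k).comap f.injective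
  rw [comap_top f.injective] at h
  exact ⟨_, h⟩

/-- For $n \ge 4$, $sa(K_n) = \lceil n/2 \rceil + 1$. -/
theorem starArboricity_completeGraph (n : ℕ) (hn : 4 ≤ n) :
    starArboricity (⊤ : SimpleGraph (Fin n)) = (n + 1) / 2 + 1 := by
  obtain ⟨F, hF⟩ := exists_isGalaxyDecomposition_top (Fin n) (k := (n + 1) / 2)
    (by simp only [Fintype.card_fin]; omega)
  obtain ⟨F', hF'⟩ := hF.exists_fin_starArboricity
  have hupper := hF.starArboricity_le_card
  have hlower := hF'.card_lt_of_top
  simp only [Fintype.card_fin, Fintype.card_option] at hupper hlower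
  omega
end

section
/- For every t ≥ 2, sa(Q_{2^t - 1}) ≤ 2^{t-1} + 1, derived from the fact that the chromatic number of the square of Q_{2^t - 1} equals 2^t. -/
/-- The square of a graph: two distinct vertices are adjacent iff their
distance in `G` is at most 2. -/
def square {V : Type*} (G : SimpleGraph V) : SimpleGraph V where
  Adj u v := u ≠ v ∧ (G.Adj u v ∨ ∃ w, G.Adj u w ∧ G.Adj w v)
  symm := by
    constructor
    rintro u v ⟨h1, h2⟩
    refine ⟨h1.symm, ?_⟩
    rcases h2 with h | ⟨w, hw1, hw2⟩
    · exact Or.inl h.symm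
    · exact Or.inr ⟨w, hw2.symm, hw1.symm⟩
  loopless := by constructor; rintro u ⟨h, -⟩; exact h rfl

/-!
A proper colouring `C` of `G²` with `2m` colours is a homomorphism from `G` to the complete
graph on the colours that is injective on every neighbourhood. Pulling a galaxy back along such
a map gives a galaxy: a triangle or a path with three edges upstairs maps to one downstairs,
since two vertices with a common neighbour get different colours. So it suffices to split
`K_{2m}` into `m + 1` galaxies. Group the colours into `m` pairs; the edges inside the pairs form
a matching, and each edge between two pairs is given to one of them in such a way that every
colour outside pair `p` is joined, within class `p`, to exactly one of the two colours of `p`.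
Class `p` is then a union of stars centred at the colours of `p`. Take `m = 2^(t-1)`.
-/

open SimpleGraph

section Galaxy

variable {V α : Type*}

def HasGalaxyPartition (G : SimpleGraph V) (n : ℕ) : Prop :=
  ∃ F : Fin n → SimpleGraph V,
    (∀ i, F i ≤ G) ∧ (∀ i, IsGalaxy (F i)) ∧ (∀ u v, G.Adj u v → ∃! i, (F i).Adj u v)

lemma starArboricity_le_s19 {G : SimpleGraph V} {n : ℕ} (h : HasGalaxyPartition G n) :
    starArboricity G ≤ n :=
  Nat.sInf_le h

lemma isGalaxy_of_forall_adj_leaf {F : SimpleGraph V}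
    (h : ∀ u v, F.Adj u v → (∀ w, F.Adj u w → w = v) ∨ (∀ w, F.Adj v w → w = u)) :
    IsGalaxy F := by
  refine ⟨fun a b c hab hbc hca => ?_, fun a b c d hab hbc hcd => ?_⟩
  · rcases h a b hab with ha | hb
    · exact F.loopless.irrefl b ((ha c hca.symm) ▸ hbc)
    · exact F.loopless.irrefl c ((hb c hbc) ▸ hca)
  · rcases h b c hbc with hb | hc
    · exact Or.inl (hb a hab.symm)
    · exact Or.inr (hc d hcd).symm

lemma IsGalaxy.inf_comap {G : SimpleGraph V} {H : SimpleGraph α} (hH : IsGalaxy H) (f : V → α)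
    (hf : ∀ v x y, G.Adj v x → G.Adj v y → f x = f y → x = y) :
    IsGalaxy (G ⊓ H.comap f) := by
  refine ⟨fun a b c hab hbc hca => hH.1 _ _ _ hab.2 hbc.2 hca.2, fun a b c d hab hbc hcd => ?_⟩
  rcases hH.2 _ _ _ _ hab.2 hbc.2 hcd.2 with hac | hbd
  · exact Or.inl (hf b a c hab.1.symm hbc.1 hac)
  · exact Or.inr (hf c b d hbc.1.symm hcd.1 hbd)

lemma HasGalaxyPartition.of_hom {G : SimpleGraph V} {H : SimpleGraph α} {n : ℕ}
    (hH : HasGalaxyPartition H n) (f : G →g H)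
    (hf : ∀ v x y, G.Adj v x → G.Adj v y → f x = f y → x = y) :
    HasGalaxyPartition G n := by
  obtain ⟨F, -, hgal, huniq⟩ := hH
  refine ⟨fun i => G ⊓ (F i).comap f, fun i => inf_le_left,
    fun i => (hgal i).inf_comap f hf, fun u v huv => ?_⟩
  obtain ⟨i, hi, hi_uniq⟩ := huniq _ _ (f.map_adj huv)
  exact ⟨i, ⟨huv, hi⟩, fun j hj => hi_uniq j hj.2⟩

lemma le_square (G : SimpleGraph V) : G ≤ square G :=
  fun _ _ h => ⟨G.ne_of_adj h, Or.inl h⟩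

lemma hasGalaxyPartition_of_square_coloring {G : SimpleGraph V} {n : ℕ}
    (htop : HasGalaxyPartition (⊤ : SimpleGraph α) n) (C : (square G).Coloring α) :
    HasGalaxyPartition G n :=
  htop.of_hom (C.comp (Hom.ofLE (le_square G))) fun v x y hx hy hxy => by
    by_contra hne
    exact C.valid ⟨hne, Or.inr ⟨v, hx.symm, hy⟩⟩ hxy

end Galaxy

section PairClass

variable {m : ℕ}

/-- Colour `(p, s)` is colour `s` of pair `p`. An edge inside a pair gets class `last`; an edge
between pairs `p < q` gets class `p` if its two bits agree and class `q` otherwise, so that a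
colour has a single possible partner in each class other than that of its own pair. -/
def pairClass (a b : Fin m × Bool) : Fin (m + 1) :=
  if a.1 = b.1 then Fin.last m
  else if (a.2 = b.2 ↔ a.1 < b.1) then a.1.castSucc else b.1.castSucc

lemma pairClass_comm (a b : Fin m × Bool) : pairClass a b = pairClass b a := by
  unfold pairClass
  split_ifs <;> grind

lemma fst_ne_of_pairClass_eq_castSucc {a b : Fin m × Bool} (h : pairClass a b = a.1.castSucc) :
    a.1 ≠ b.1 := by
  unfold pairClass at h
  grind [Fin.castSucc_ne_last]

lemma pairClass_eq_last {a c : Fin m × Bool} (hc : c ≠ a) (h : pairClass a c = Fin.last m) :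
    c = (a.1, !a.2) := by
  unfold pairClass at h
  obtain ⟨a1, a2⟩ := a
  obtain ⟨c1, c2⟩ := c
  cases a2 <;> cases c2 <;> split_ifs at h <;> grind [Fin.castSucc_ne_last]

lemma pairClass_eq_castSucc {a c : Fin m × Bool} {j : Fin m} (hj : j ≠ a.1)
    (h : pairClass a c = j.castSucc) : c = (j, a.2 ^^ decide (a.1 < j)) := by
  unfold pairClass at h
  obtain ⟨a1, a2⟩ := a
  obtain ⟨c1, c2⟩ := c
  cases a2 <;> cases c2 <;> split_ifs at h <;> grind [Fin.castSucc_ne_last, Fin.castSucc_inj]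

lemma eq_of_pairClass_eq {a c d : Fin m × Bool} (hc : c ≠ a) (hd : d ≠ a)
    (h : pairClass a c = pairClass a d) (ha : pairClass a c ≠ a.1.castSucc) : c = d := by
  induction hi : pairClass a c using Fin.lastCases with
  | last => rw [pairClass_eq_last hc hi, pairClass_eq_last hd (h.symm.trans hi)]
  | cast j =>
    have hj : j ≠ a.1 := fun hja => ha (hja ▸ hi)
    rw [pairClass_eq_castSucc hj hi, pairClass_eq_castSucc hj (h.symm.trans hi)]

def pairGalaxy (i : Fin (m + 1)) : SimpleGraph (Fin m × Bool) :=
  SimpleGraph.fromRel fun a b => pairClass a b = i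

lemma pairGalaxy_adj {i : Fin (m + 1)} {a b : Fin m × Bool} :
    (pairGalaxy i).Adj a b ↔ a ≠ b ∧ pairClass a b = i := by
  simp [pairGalaxy, pairClass_comm b a]

lemma isGalaxy_pairGalaxy (i : Fin (m + 1)) : IsGalaxy (pairGalaxy i) := by
  refine isGalaxy_of_forall_adj_leaf fun a b hab => ?_
  rw [pairGalaxy_adj] at hab
  obtain ⟨hne, rfl⟩ := hab
  by_cases ha : pairClass a b = a.1.castSucc
  · have hb : pairClass b a ≠ b.1.castSucc := by
      rw [pairClass_comm, ha]
      exact fun h => fst_ne_of_pairClass_eq_castSucc ha (Fin.castSucc_injective _ h)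
    refine Or.inr fun w hw => ?_
    rw [pairGalaxy_adj, pairClass_comm a b] at hw
    exact eq_of_pairClass_eq hw.1.symm hne hw.2 (hw.2 ▸ hb)
  · refine Or.inl fun w hw => ?_
    rw [pairGalaxy_adj] at hw
    exact eq_of_pairClass_eq hw.1.symm hne.symm hw.2 (hw.2 ▸ ha)

lemma hasGalaxyPartition_top_pairs :
    HasGalaxyPartition (⊤ : SimpleGraph (Fin m × Bool)) (m + 1) :=
  ⟨pairGalaxy, fun _ => le_top, isGalaxy_pairGalaxy, fun a b hab =>
    ⟨pairClass a b, pairGalaxy_adj.2 ⟨hab, rfl⟩, fun _ hi => (pairGalaxy_adj.1 hi).2.symm⟩⟩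

end PairClass

lemma starArboricity_le_of_square_colorable {V : Type*} {G : SimpleGraph V} {m : ℕ}
    (h : (square G).Colorable (2 * m)) : starArboricity G ≤ m + 1 :=
  starArboricity_le_s19 <| hasGalaxyPartition_of_square_coloring hasGalaxyPartition_top_pairs <|
    h.toColoring (by simp [mul_comm])

theorem starArboricity_cube_le_of_square_chromatic_general (t : ℕ)
    (hchi : (square (cubeGraph (2 ^ t - 1))).chromaticNumber = (2 ^ t : ℕ)) :
    starArboricity (cubeGraph (2 ^ t - 1)) ≤ 2 ^ (t - 1) + 1 := by
  have hcol : (square (cubeGraph (2 ^ t - 1))).Colorable (2 ^ t) :=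
    chromaticNumber_le_iff_colorable.mp hchi.le
  have hpow : 2 ^ t ≤ 2 * 2 ^ (t - 1) := by
    rw [← pow_succ']
    exact Nat.pow_le_pow_right two_pos (by omega)
  exact starArboricity_le_of_square_colorable (hcol.mono hpow)

/-- $sa(Q_{2^t-1}) \le 2^{t-1}+1$ for $t \ge 2$, as derived from
$\chi((Q_{2^t-1})^2) = 2^t$. -/
theorem starArboricity_cube_le_of_square_chromatic (t : ℕ) (ht : 2 ≤ t)
    (hchi : (square (cubeGraph (2 ^ t - 1))).chromaticNumber = (2 ^ t : ℕ)) :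
    starArboricity (cubeGraph (2 ^ t - 1)) ≤ 2 ^ (t - 1) + 1 :=
  starArboricity_cube_le_of_square_chromatic_general t hchi
end
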